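/- Let A be a real n×n matrix, G a real n×r matrix, H₁ a real s×n matrix, γ_f > 0 and μ > 0 scalars, and P a symmetric positive definite real n×n matrix with AᵀP + PA ≼ −2μP. Let e : ℝ → ℝⁿ be differentiable and f : ℝ → ℝʳ satisfy, for all t ≥ 0, e′(t) = A·e(t) + G·f(t) and ‖f(t)‖ ≤ γ_f·‖H₁·e(t)‖. Set c₁ = μ − μ⁻¹·γ_f²·λ_min(P)⁻¹·‖P‖·‖G‖²·‖H₁‖², where λ_min(P) is the smallest eigenvalue of P. Then for all t ≥ 0: ‖e(t)‖² ≤ λ_min(P)⁻¹·(e(0)ᵀP·e(0))·exp(−c₁·t). -/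

import Mathlib

open Matrix

/-! `V = eᵀ P e` is a Lyapunov function. Along solutions
`V' = eᵀ (AᵀP + PA) e + 2 eᵀ P G f ≤ -2μ V + μ V + μ⁻¹ (G f)ᵀ P (G f)` by Young's inequality for the
inner product defined by `P`, and the sector bound on `f` together with `λ_min(P) ‖e‖² ≤ V` bounds
the last term by `μ⁻¹ γ_f² λ_min(P)⁻¹ ‖P‖ ‖G‖² ‖H₁‖² V`. So `V' ≤ -c₁ V`, Grönwall's inequality
gives `V t ≤ V 0 * exp (-c₁ t)`, and `‖e t‖² ≤ λ_min(P)⁻¹ V t`. -/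

/-- The spectral (operator 2-) norm of a real matrix, i.e. the operator norm of
the induced linear map between Euclidean spaces. -/
noncomputable def specNorm {m n : ℕ} (M : Matrix (Fin m) (Fin n) ℝ) : ℝ :=
  ‖LinearMap.toContinuousLinearMap (Matrix.toEuclideanLin M)‖

lemma HasDerivAt.dotProduct {ι : Type*} [Fintype ι] {u v : ℝ → ι → ℝ} {u' v' : ι → ℝ} {t : ℝ}
    (hu : HasDerivAt u u' t) (hv : HasDerivAt v v' t) :
    HasDerivAt (fun s ↦ u s ⬝ᵥ v s) (u' ⬝ᵥ v t + u t ⬝ᵥ v') t := by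
  rw [hasDerivAt_pi] at hu hv
  simp only [_root_.dotProduct, ← Finset.sum_add_distrib]
  exact HasDerivAt.fun_sum fun i _ ↦ (hu i).mul (hv i)

namespace Matrix

section Quadratic

variable {ι : Type*} [Fintype ι]

lemma sum_sq_eq_dotProduct_self (v : ι → ℝ) : ∑ i, v i ^ 2 = v ⬝ᵥ v := by
  simp only [dotProduct, sq]

lemma dotProduct_self_le_of_sqrt_le {κ : Type*} [Fintype κ] {v : ι → ℝ} {w : κ → ℝ} {c : ℝ}
    (h : √(∑ i, v i ^ 2) ≤ c * √(∑ j, w j ^ 2)) : v ⬝ᵥ v ≤ c ^ 2 * (w ⬝ᵥ w) := by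
  have hsq := (Real.sqrt_le_iff.mp h).2
  rwa [mul_pow, Real.sq_sqrt (by positivity), sum_sq_eq_dotProduct_self,
    sum_sq_eq_dotProduct_self] at hsq

lemma IsSymm.dotProduct_mulVec_comm {P : Matrix ι ι ℝ} (hP : P.IsSymm) (x y : ι → ℝ) :
    x ⬝ᵥ P *ᵥ y = y ⬝ᵥ P *ᵥ x := by
  rw [dotProduct_mulVec, ← mulVec_transpose, hP.eq, dotProduct_comm]

lemma PosSemidef.two_mul_dotProduct_mulVec_le {P : Matrix ι ι ℝ} (hP : P.PosSemidef) {μ : ℝ}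
    (hμ : 0 < μ) (x y : ι → ℝ) :
    2 * (x ⬝ᵥ P *ᵥ y) ≤ μ * (x ⬝ᵥ P *ᵥ x) + μ⁻¹ * (y ⬝ᵥ P *ᵥ y) := by
  have h := hP.dotProduct_mulVec_nonneg (μ • x - y)
  simp only [star_trivial, mulVec_sub, mulVec_smul, dotProduct_sub, sub_dotProduct,
    smul_dotProduct, dotProduct_smul, smul_eq_mul] at h
  rw [(isHermitian_iff_isSymm.mp hP.1).dotProduct_mulVec_comm y x] at h
  calc 2 * (x ⬝ᵥ P *ᵥ y) = μ⁻¹ * (2 * μ * (x ⬝ᵥ P *ᵥ y)) := by field_simp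
    _ ≤ μ⁻¹ * (μ ^ 2 * (x ⬝ᵥ P *ᵥ x) + y ⬝ᵥ P *ᵥ y) := by gcongr; linarith
    _ = μ * (x ⬝ᵥ P *ᵥ x) + μ⁻¹ * (y ⬝ᵥ P *ᵥ y) := by field_simp

lemma dotProduct_mulVec_mulVec_le_of_lyapunov {A P : Matrix ι ι ℝ} (hP : P.IsSymm) {μ : ℝ}
    (hLyap : ((-(2 * μ)) • P - (Aᵀ * P + P * A)).PosSemidef) (x : ι → ℝ) :
    x ⬝ᵥ P *ᵥ (A *ᵥ x) ≤ -μ * (x ⬝ᵥ P *ᵥ x) := by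
  have h := hLyap.dotProduct_mulVec_nonneg x
  simp only [star_trivial, sub_mulVec, add_mulVec, smul_mulVec, ← mulVec_mulVec,
    dotProduct_sub, dotProduct_add, dotProduct_smul, smul_eq_mul] at h
  rw [dotProduct_mulVec x Aᵀ, vecMul_transpose, hP.dotProduct_mulVec_comm (A *ᵥ x)] at h
  linarith

open scoped MatrixOrder in
lemma IsHermitian.iInf_eigenvalues_mul_dotProduct_self_le [DecidableEq ι] {P : Matrix ι ι ℝ}
    (hP : P.IsHermitian) (x : ι → ℝ) : (⨅ i, hP.eigenvalues i) * (x ⬝ᵥ x) ≤ x ⬝ᵥ P *ᵥ x := by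
  have hle : algebraMap ℝ (Matrix ι ι ℝ) (⨅ i, hP.eigenvalues i) ≤ P := by
    rw [algebraMap_le_iff_le_spectrum hP.isSelfAdjoint, hP.spectrum_real_eq_range_eigenvalues]
    rintro _ ⟨i, rfl⟩
    exact ciInf_le (Set.finite_range _).bddBelow i
  have h := (le_iff.mp hle).dotProduct_mulVec_nonneg x
  simp only [star_trivial, sub_mulVec, Algebra.algebraMap_eq_smul_one, smul_mulVec, one_mulVec,
    dotProduct_sub, dotProduct_smul, smul_eq_mul] at h
  linarith

lemma PosDef.dotProduct_self_le_inv_iInf_eigenvalues_mul [DecidableEq ι] {P : Matrix ι ι ℝ}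
    (hP : P.PosDef) (x : ι → ℝ) : x ⬝ᵥ x ≤ (⨅ i, hP.1.eigenvalues i)⁻¹ * (x ⬝ᵥ P *ᵥ x) := by
  cases isEmpty_or_nonempty ι with
  -- for empty `ι` the infimum takes the junk value `0`, and both sides vanish
  | inl _ => simp [dotProduct]
  | inr _ =>
    obtain ⟨i, hi⟩ := exists_eq_ciInf_of_finite (f := hP.1.eigenvalues)
    rw [le_inv_mul_iff₀ (hi ▸ hP.eigenvalues_pos i)]
    exact hP.1.iInf_eigenvalues_mul_dotProduct_self_le x

lemma IsSymm.hasDerivAt_dotProduct_mulVec {P : Matrix ι ι ℝ}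
    (hP : P.IsSymm) {e : ℝ → ι → ℝ} {e' : ι → ℝ} {t : ℝ} (he : HasDerivAt e e' t) :
    HasDerivAt (fun s ↦ e s ⬝ᵥ P *ᵥ e s) (2 * (e t ⬝ᵥ P *ᵥ e')) t := by
  have hPe : HasDerivAt (fun s ↦ P *ᵥ e s) (P *ᵥ e') t :=
    (LinearMap.toContinuousLinearMap (mulVecLin P)).hasFDerivAt.comp_hasDerivAt t he
  convert he.dotProduct hPe using 1
  rw [hP.dotProduct_mulVec_comm e']
  ring

end Quadratic

section SpecNorm

variable {m k : ℕ}

lemma dotProduct_self_eq_norm_toLp_sq (v : Fin m → ℝ) : v ⬝ᵥ v = ‖WithLp.toLp 2 v‖ ^ 2 := by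
  rw [← real_inner_self_eq_norm_sq, EuclideanSpace.inner_toLp_toLp, star_trivial]

lemma norm_toLp_mulVec_le_specNorm_mul (M : Matrix (Fin m) (Fin k) ℝ) (x : Fin k → ℝ) :
    ‖WithLp.toLp 2 (M *ᵥ x)‖ ≤ specNorm M * ‖WithLp.toLp 2 x‖ :=
  (LinearMap.toContinuousLinearMap (toEuclideanLin M)).le_opNorm (WithLp.toLp 2 x)

lemma mulVec_dotProduct_mulVec_le (M : Matrix (Fin m) (Fin k) ℝ) (x : Fin k → ℝ) :
    M *ᵥ x ⬝ᵥ M *ᵥ x ≤ specNorm M ^ 2 * (x ⬝ᵥ x) := by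
  rw [dotProduct_self_eq_norm_toLp_sq, dotProduct_self_eq_norm_toLp_sq, ← mul_pow]
  exact pow_le_pow_left₀ (norm_nonneg _) (norm_toLp_mulVec_le_specNorm_mul M x) 2

lemma dotProduct_mulVec_le_specNorm_mul (P : Matrix (Fin m) (Fin m) ℝ) (x : Fin m → ℝ) :
    x ⬝ᵥ P *ᵥ x ≤ specNorm P * (x ⬝ᵥ x) := by
  calc x ⬝ᵥ P *ᵥ x = inner ℝ (WithLp.toLp 2 (P *ᵥ x)) (WithLp.toLp 2 x) := by
        rw [EuclideanSpace.inner_toLp_toLp, star_trivial]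
    _ ≤ ‖WithLp.toLp 2 (P *ᵥ x)‖ * ‖WithLp.toLp 2 x‖ := real_inner_le_norm _ _
    _ ≤ specNorm P * ‖WithLp.toLp 2 x‖ * ‖WithLp.toLp 2 x‖ := by
        gcongr; exact norm_toLp_mulVec_le_specNorm_mul P x
    _ = specNorm P * (x ⬝ᵥ x) := by rw [dotProduct_self_eq_norm_toLp_sq]; ring

end SpecNorm

end Matrix

lemma le_mul_exp_of_hasDerivAt_le_mul {V V' : ℝ → ℝ} {K : ℝ}
    (hV : ∀ t ≥ 0, HasDerivAt V (V' t) t) (hbound : ∀ t ≥ 0, V' t ≤ K * V t)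
    {t : ℝ} (ht : 0 ≤ t) : V t ≤ V 0 * Real.exp (K * t) := by
  have h := le_gronwallBound_of_liminf_deriv_right_le (f := V) (f' := V') (ε := 0) (b := t)
    (fun x hx ↦ (hV x hx.1).continuousAt.continuousWithinAt)
    (fun x hx r hr ↦ ((hV x hx.1).hasDerivWithinAt.liminf_right_slope_le hr).mono
      fun z hz ↦ by simpa [slope_def_field, div_eq_inv_mul] using hz)
    le_rfl (fun x hx ↦ by simpa using hbound x hx.1) t ⟨ht, le_rfl⟩
  rwa [sub_zero, gronwallBound_ε0] at h

lemma two_mul_dotProduct_mulVec_add_mulVec_le {n r s : ℕ} {A P : Matrix (Fin n) (Fin n) ℝ}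
    {G : Matrix (Fin n) (Fin r) ℝ} {H₁ : Matrix (Fin s) (Fin n) ℝ} {γf μ : ℝ} (hμ : 0 < μ)
    (hP : P.PosDef) (hLyap : ((-(2 * μ)) • P - (Aᵀ * P + P * A)).PosSemidef)
    {x : Fin n → ℝ} {w : Fin r → ℝ} (hw : w ⬝ᵥ w ≤ γf ^ 2 * (H₁ *ᵥ x ⬝ᵥ H₁ *ᵥ x)) :
    2 * (x ⬝ᵥ P *ᵥ (A *ᵥ x + G *ᵥ w)) ≤
      -(μ - μ⁻¹ * γf ^ 2 * (⨅ i, hP.1.eigenvalues i)⁻¹ *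
        specNorm P * specNorm G ^ 2 * specNorm H₁ ^ 2) * (x ⬝ᵥ P *ᵥ x) := by
  have hPsymm := isHermitian_iff_isSymm.mp hP.1
  have hdrift := dotProduct_mulVec_mulVec_le_of_lyapunov hPsymm hLyap x
  have hyoung := hP.posSemidef.two_mul_dotProduct_mulVec_le hμ x (G *ᵥ w)
  have hP0 : 0 ≤ specNorm P := norm_nonneg _
  have hGw : G *ᵥ w ⬝ᵥ P *ᵥ (G *ᵥ w) ≤ specNorm P * (specNorm G ^ 2 * (γf ^ 2 *
      (specNorm H₁ ^ 2 * ((⨅ i, hP.1.eigenvalues i)⁻¹ * (x ⬝ᵥ P *ᵥ x))))) := by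
    calc G *ᵥ w ⬝ᵥ P *ᵥ (G *ᵥ w) ≤ specNorm P * (specNorm G ^ 2 * (w ⬝ᵥ w)) := by
          grw [dotProduct_mulVec_le_specNorm_mul, mulVec_dotProduct_mulVec_le]
      _ ≤ specNorm P * (specNorm G ^ 2 * (γf ^ 2 * (specNorm H₁ ^ 2 * (x ⬝ᵥ x)))) := by
          grw [hw, mulVec_dotProduct_mulVec_le]
      _ ≤ _ := by grw [hP.dotProduct_self_le_inv_iInf_eigenvalues_mul x]
  have hGw' := mul_le_mul_of_nonneg_left hGw (inv_nonneg.mpr hμ.le)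
  rw [mulVec_add, dotProduct_add]
  linarith

theorem stmt_9_general (n r s : ℕ)
    (A : Matrix (Fin n) (Fin n) ℝ) (G : Matrix (Fin n) (Fin r) ℝ)
    (H₁ : Matrix (Fin s) (Fin n) ℝ)
    (γf μ : ℝ) (hμ : 0 < μ)
    (P : Matrix (Fin n) (Fin n) ℝ) (hP : P.PosDef)
    (hLyap : ((-(2 * μ)) • P - (Aᵀ * P + P * A)).PosSemidef)
    (e : ℝ → Fin n → ℝ) (f : ℝ → Fin r → ℝ)
    (he : Differentiable ℝ e)
    (hode : ∀ t ≥ (0 : ℝ), deriv e t = A.mulVec (e t) + G.mulVec (f t))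
    (hf : ∀ t ≥ (0 : ℝ), Real.sqrt (∑ i, f t i ^ 2) ≤
      γf * Real.sqrt (∑ i, H₁.mulVec (e t) i ^ 2)) :
    ∀ t ≥ (0 : ℝ),
      (∑ i, e t i ^ 2) ≤
        (⨅ i, hP.1.eigenvalues i)⁻¹ * (e 0 ⬝ᵥ P.mulVec (e 0)) *
          Real.exp (-(μ - μ⁻¹ * γf ^ 2 * (⨅ i, hP.1.eigenvalues i)⁻¹ *
            specNorm P * specNorm G ^ 2 * specNorm H₁ ^ 2) * t) := by
  intro t ht
  have hdecay := le_mul_exp_of_hasDerivAt_le_mul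
    (fun τ _ ↦ (isHermitian_iff_isSymm.mp hP.1).hasDerivAt_dotProduct_mulVec (he τ).hasDerivAt)
    (fun τ hτ ↦ by
      rw [hode τ hτ]
      exact two_mul_dotProduct_mulVec_add_mulVec_le hμ hP hLyap
        (dotProduct_self_le_of_sqrt_le (hf τ hτ))) ht
  have hlam : 0 ≤ (⨅ i, hP.1.eigenvalues i)⁻¹ :=
    inv_nonneg.mpr (Real.iInf_nonneg fun i ↦ (hP.eigenvalues_pos i).le)
  rw [sum_sq_eq_dotProduct_self, mul_assoc]
  exact (hP.dotProduct_self_le_inv_iInf_eigenvalues_mul (e t)).trans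
    (mul_le_mul_of_nonneg_left hdecay hlam)

/-- Exponential decay-rate estimate (equation (14)) of Theorem 1
of the paper for the observer error dynamics: if `AᵀP + PA ≼ -2μP`,
`e′ = A e + G f` and `‖f(t)‖ ≤ γ_f ‖H₁ e(t)‖`, then
`‖e(t)‖² ≤ λ_min(P)⁻¹ (e(0)ᵀ P e(0)) exp(-c₁ t)` with
`c₁ = μ - μ⁻¹ γ_f² λ_min(P)⁻¹ ‖P‖ ‖G‖² ‖H₁‖²`. -/
theorem stmt_9 (n r s : ℕ) (hn : 0 < n)
    (A : Matrix (Fin n) (Fin n) ℝ) (G : Matrix (Fin n) (Fin r) ℝ)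
    (H₁ : Matrix (Fin s) (Fin n) ℝ)
    (γf μ : ℝ) (hγf : 0 < γf) (hμ : 0 < μ)
    (P : Matrix (Fin n) (Fin n) ℝ) (hPsymm : P.IsSymm) (hP : P.PosDef)
    (hLyap : ((-(2 * μ)) • P - (Aᵀ * P + P * A)).PosSemidef)
    (e : ℝ → Fin n → ℝ) (f : ℝ → Fin r → ℝ)
    (he : Differentiable ℝ e)
    (hode : ∀ t ≥ (0 : ℝ), deriv e t = A.mulVec (e t) + G.mulVec (f t))
    (hf : ∀ t ≥ (0 : ℝ), Real.sqrt (∑ i, f t i ^ 2) ≤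
      γf * Real.sqrt (∑ i, H₁.mulVec (e t) i ^ 2)) :
    ∀ t ≥ (0 : ℝ),
      (∑ i, e t i ^ 2) ≤
        (⨅ i, hP.1.eigenvalues i)⁻¹ * (e 0 ⬝ᵥ P.mulVec (e 0)) *
          Real.exp (-(μ - μ⁻¹ * γf ^ 2 * (⨅ i, hP.1.eigenvalues i)⁻¹ *
            specNorm P * specNorm G ^ 2 * specNorm H₁ ^ 2) * t) :=
  stmt_9_general n r s A G H₁ γf μ hμ P hP hLyap e f he hode hf
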